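/- Let M ≥ 1 and suppose α ∈ 𝐕 satisfies g ≼ α ≺ ξ(1), where g := ((k+1)(k−1))^∞ and ξ(1) := (k+1)k^∞ if M = 2k, and g := ((k+1)(k+1)kk)^∞ and ξ(1) := (k+1)((k+1)k)^∞ if M = 2k+1. Then the subshift V_α is not topologically transitive. (These bounds correspond to bases q ∈ [q_{NT}, q_T).) -/
import Mathlib


namespace Paper

/-- A digit sequence over the alphabet `{0,…,M}` (0-indexed: `x 0` is the digit `x_1`). -/
def IsSeq (M : ℕ) (x : ℕ → ℕ) : Prop := ∀ i, x i ≤ M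

/-- The `n`-fold left shift `σ^n`. -/
def shiftn (n : ℕ) (x : ℕ → ℕ) : ℕ → ℕ := fun i => x (i + n)

/-- Reflection of a sequence: `x̄ = (M - x_i)_i`. -/
def reflectSeq (M : ℕ) (x : ℕ → ℕ) : ℕ → ℕ := fun i => M - x i

/-- Strict lexicographic order on sequences. -/
def SeqLt (x y : ℕ → ℕ) : Prop := ∃ n, (∀ i < n, x i = y i) ∧ x n < y n

/-- Lexicographic order on sequences. -/
def SeqLe (x y : ℕ → ℕ) : Prop := SeqLt x y ∨ x = y

/-- Reflection of a word. -/
def reflectWord (M : ℕ) (w : List ℕ) : List ℕ := w.map (fun d => M - d)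

/-- `w⁻`: decrement the last letter of a word. -/
def wordMinus (w : List ℕ) : List ℕ := w.dropLast ++ [w.getLastD 0 - 1]

/-- `w⁺`: increment the last letter of a word. -/
def wordPlus (w : List ℕ) : List ℕ := w.dropLast ++ [w.getLastD 0 + 1]

/-- The periodic sequence `w^∞`. -/
def per (w : List ℕ) : ℕ → ℕ := fun i => w.getD (i % w.length) 0

/-- The sequence starting with the word `w` followed by the sequence `x`. -/
def wordThen (w : List ℕ) (x : ℕ → ℕ) : ℕ → ℕ :=
  fun i => if i < w.length then w.getD i 0 else x (i - w.length)

/-- The factor `x_{i+1} … x_{i+n}` of a sequence (0-indexed start `i`, length `n`). -/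
def factor (x : ℕ → ℕ) (i n : ℕ) : List ℕ := (List.range n).map (fun j => x (i + j))

/-- The prefix `x_1 … x_n` of a sequence. -/
def pre (x : ℕ → ℕ) (n : ℕ) : List ℕ := factor x 0 n

/-- The set `𝐕` of sequences `a` with `ā ≼ σⁿ(a) ≼ a` for all `n ≥ 0`. -/
def Vset (M : ℕ) : Set (ℕ → ℕ) :=
  {a | IsSeq M a ∧ ∀ n, SeqLe (reflectSeq M a) (shiftn n a) ∧ SeqLe (shiftn n a) a}

/-- The subshift `V_α` of sequences `x` with `ᾱ ≼ σⁿ(x) ≼ α` for all `n ≥ 0`. -/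
def Vsub (M : ℕ) (α : ℕ → ℕ) : Set (ℕ → ℕ) :=
  {x | IsSeq M x ∧ ∀ n, SeqLe (reflectSeq M α) (shiftn n x) ∧ SeqLe (shiftn n x) α}

/-- `B_n(X)`: the words of length `n` occurring as factors of elements of `X`. -/
def Bn (n : ℕ) (X : Set (ℕ → ℕ)) : Set (List ℕ) :=
  {w | w.length = n ∧ ∃ x ∈ X, ∃ i, w = factor x i n}

/-- The language of `X`: all factors of elements of `X`. -/
def Lang (X : Set (ℕ → ℕ)) : Set (List ℕ) :=
  {w | ∃ x ∈ X, ∃ i, w = factor x i w.length}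

/-- Topological transitivity: any two nonempty factors can be connected within the language. -/
def TopTransitive (X : Set (ℕ → ℕ)) : Prop :=
  ∀ u v, u ∈ Lang X → v ∈ Lang X → u ≠ [] → v ≠ [] → ∃ w, (u ++ w ++ v) ∈ Lang X

/-- Strict lexicographic order on words (intended for words of equal length). -/
def WordLt (u v : List ℕ) : Prop := List.Lex (· < ·) u v

/-- Lexicographic order on words (intended for words of equal length). -/
def WordLe (u v : List ℕ) : Prop := WordLt u v ∨ u = v

/-- Irreducible sequence: `a ∈ 𝐕` and `a_1…a_j (\overline{a_1…a_j}⁺)^∞ ≺ a` for every `j ≥ 1`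
with `a_j ≥ 1` such that `(a_1…a_j⁻)^∞ ∈ 𝐕`. -/
def IrrSeq (M : ℕ) (a : ℕ → ℕ) : Prop :=
  a ∈ Vset M ∧ ∀ j, 1 ≤ j → 1 ≤ a (j - 1) → per (wordMinus (pre a j)) ∈ Vset M →
    SeqLt (wordThen (pre a j) (per (wordPlus (reflectWord M (pre a j))))) a

/-- The Thue–Morse sequence: `tau i` is the parity of the number of `1`s in the binary
expansion of `i`. -/
def tau (i : ℕ) : ℕ := (Nat.digits 2 i).sum % 2

/-- The generalized Thue–Morse sequence `λ` (0-indexed: `lam M i = λ_{i+1}`);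
`λ_i = k + τ_i - τ_{i-1}` if `M = 2k`, and `λ_i = k + τ_i` if `M = 2k+1`. -/
def lam (M : ℕ) (i : ℕ) : ℕ :=
  if M % 2 = 0 then (M / 2 + tau (i + 1)) - tau i else M / 2 + tau (i + 1)

/-- The word `λ_1 … λ_L`. -/
def lamWord (M L : ℕ) : List ℕ := (List.range L).map (lam M)

/-- `2^(n-1)` if `M` is even, `2^n` if `M` is odd. -/
def xiLen (M n : ℕ) : ℕ := if M % 2 = 0 then 2 ^ (n - 1) else 2 ^ n

/-- The sequence `ξ(n)`. -/
def xi (M n : ℕ) : ℕ → ℕ :=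
  wordThen (lamWord M (xiLen M n)) (per (wordPlus (reflectWord M (lamWord M (xiLen M n)))))

/-- `2^n` if `M` is even, `2^(n+1)` if `M` is odd. -/
def starThreshold (M n : ℕ) : ℕ := if M % 2 = 0 then 2 ^ n else 2 ^ (n + 1)

/-- `*`-irreducible sequence. -/
def StarIrrSeq (M : ℕ) (a : ℕ → ℕ) : Prop :=
  a ∈ Vset M ∧ ∃ n, 1 ≤ n ∧ SeqLe (xi M (n + 1)) a ∧ SeqLt a (xi M n) ∧
    ∀ j, 1 ≤ a (j - 1) → per (wordMinus (pre a j)) ∈ Vset M → starThreshold M n < j →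
      SeqLt (wordThen (pre a j) (per (wordPlus (reflectWord M (pre a j))))) a

/-- The projection `π_q(x) = ∑_{i ≥ 1} x_i q^{-i}`. -/
noncomputable def piBase (q : ℝ) (x : ℕ → ℕ) : ℝ := ∑' i : ℕ, (x i : ℝ) / q ^ (i + 1)

/-- The set `𝐔_q` of sequences that are the unique expansion of their projection. -/
def Uset (M : ℕ) (q : ℝ) : Set (ℕ → ℕ) :=
  {a | IsSeq M a ∧ ∀ b, IsSeq M b → piBase q b = piBase q a → b = a}

/-- The entropy function `H(q) = limsup_n (log #B_n(𝐔_q))/n`. -/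
noncomputable def entropy (M : ℕ) (q : ℝ) : ℝ :=
  Filter.limsup (fun n : ℕ => Real.log ((Bn n (Uset M q)).ncard) / (n : ℝ)) Filter.atTop

/-- `α` is the quasi-greedy expansion of `1` in base `q`. -/
def QuasiGreedy (M : ℕ) (q : ℝ) (α : ℕ → ℕ) : Prop :=
  IsSeq M α ∧ piBase q α = 1 ∧ {n | α n ≠ 0}.Infinite ∧
    ∀ n, 1 ≤ n → α (n - 1) < M → SeqLe (shiftn n α) α

/-- The univoque set `𝒰_q ⊆ ℝ`. -/
def univoqueSet (M : ℕ) (q : ℝ) : Set ℝ :=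
  {x | ∃! a : ℕ → ℕ, IsSeq M a ∧ piBase q a = x}

/-- The bifurcation set `E` of the entropy function. -/
def Eset (M : ℕ) : Set ℝ :=
  {q | q ∈ Set.Ioc 1 (M + 1 : ℝ) ∧ ∀ ε : ℝ, 0 < ε →
    ∃ p ∈ Set.Ioo (q - ε) (q + ε) ∩ Set.Ioc 1 (M + 1 : ℝ), entropy M p ≠ entropy M q}

/-- `[pL, pR]` is an irreducible interval. -/
def IrrInterval (M : ℕ) (pL pR : ℝ) : Prop :=
  ∃ a : List ℕ, a ≠ [] ∧ (∀ d ∈ a, d ≤ M) ∧ a.getLastD 0 < M ∧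
    IrrSeq M (per a) ∧ piBase pL (per a) = 1 ∧
    piBase pR (wordThen (wordPlus a) (per (reflectWord M a))) = 1

/-- `[pL, pR]` is a `*`-irreducible interval. -/
def StarIrrInterval (M : ℕ) (pL pR : ℝ) : Prop :=
  ∃ a : List ℕ, a ≠ [] ∧ (∀ d ∈ a, d ≤ M) ∧ a.getLastD 0 < M ∧
    StarIrrSeq M (per a) ∧ piBase pL (per a) = 1 ∧
    piBase pR (wordThen (wordPlus a) (per (reflectWord M a))) = 1

/-- Primitive words. -/
def PrimitiveWord (M : ℕ) (a : List ℕ) : Prop :=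
  (∀ d ∈ a, d ≤ M) ∧ ∀ i < a.length,
    WordLt (reflectWord M (a.take (a.length - i))) (a.drop i) ∧
      WordLe (a.drop i) (a.take (a.length - i))

/-- The defining property of the reflection recurrence word:
`a_{s+1}…a_m⁻ = \overline{a_1…a_{m-s}}` with `s < m`. -/
def RRpred (M : ℕ) (a : List ℕ) (s : ℕ) : Prop :=
  s < a.length ∧ wordMinus (a.drop s) = reflectWord M (a.take (a.length - s))

instance (M : ℕ) (a : List ℕ) : DecidablePred (RRpred M a) := fun s =>
  inferInstanceAs (Decidable (s < a.length ∧
    wordMinus (a.drop s) = reflectWord M (a.take (a.length - s))))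

/-- The reflection recurrence word `R(a)` of a (primitive) word `a`. -/
noncomputable def RR (M : ℕ) (a : List ℕ) : List ℕ :=
  letI : Decidable (∃ s, RRpred M a s) := Classical.dec _
  if h : ∃ s, RRpred M a s then a.take (Nat.find h) else a

/-- Iterates `R^j(a)` of the reflection recurrence word. -/
noncomputable def RRiter (M : ℕ) (a : List ℕ) : ℕ → List ℕ
  | 0 => a
  | j + 1 => RR M (RRiter M a j)

/-- The set `𝐈_N`. -/
def INset (M N : ℕ) : Set (ℕ → ℕ) :=
  {a | IsSeq M a ∧ pre a (2 * N) = List.replicate (2 * N - 1) M ++ [0] ∧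
    ∀ s, 2 ≤ s → WordLt (List.replicate N 0) (factor a (s * N) N) ∧
      WordLt (factor a (s * N) N) (List.replicate N M)}

/-- The sequence `γ = k^∞` (`M = 2k`) or `((k+1)k)^∞` (`M = 2k+1`), the quasi-greedy expansion
of `1` in the generalized golden ratio base. -/
def gammaG (M : ℕ) : ℕ → ℕ :=
  if M % 2 = 0 then per [M / 2] else per [M / 2 + 1, M / 2]

/-- The sequence `g = ((k+1)(k-1))^∞` (`M = 2k`) or `((k+1)(k+1)kk)^∞` (`M = 2k+1`), the
quasi-greedy expansion of `1` in base `q_{NT}`. -/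
def gNT (M : ℕ) : ℕ → ℕ :=
  if M % 2 = 0 then per [M / 2 + 1, M / 2 - 1]
  else per [M / 2 + 1, M / 2 + 1, M / 2, M / 2]

lemma seqLe_ext {x y : ℕ → ℕ} (h : SeqLe x y) (n : ℕ) (he : ∀ i < n, x i = y i) :
    x n ≤ y n := by
  rcases h with ⟨m, hm, hlt⟩ | rfl
  · rcases lt_trichotomy m n with h1 | rfl | h1
    · exact absurd (he m h1) (Nat.ne_of_lt hlt)
    · exact hlt.le
    · exact (hm n h1).le
  · exact le_rfl

lemma vsub_ub {M : ℕ} {α x : ℕ → ℕ} (hx : x ∈ Vsub M α) (n : ℕ) : x n ≤ α 0 := by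
  have h := seqLe_ext (hx.2 n).2 0 (fun i hi => absurd hi (Nat.not_lt_zero _))
  simpa [shiftn] using h

lemma vsub_lb {M : ℕ} {α x : ℕ → ℕ} (hx : x ∈ Vsub M α) (n : ℕ) : M - α 0 ≤ x n := by
  have h := seqLe_ext (hx.2 n).1 0 (fun i hi => absurd hi (Nat.not_lt_zero _))
  simpa [shiftn, reflectSeq] using h

lemma tau0 : tau 0 = 0 := by simp [tau]
lemma tau1 : tau 1 = 1 := by norm_num [tau]
lemma tau2 : tau 2 = 1 := by norm_num [tau]

lemma factor_getD (x : ℕ → ℕ) (i n j : ℕ) (h : j < n) :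
    (factor x i n).getD j 0 = x (i + j) := by
  simp [factor, List.getD, h]

lemma xi1_even {M k : ℕ} (hM : M = 2 * k) (hk : 1 ≤ k) :
    ∀ i, xi M 1 i = if i = 0 then k + 1 else k := by
  subst hM
  have h2 : 2 * k % 2 = 0 := by omega
  have hd : 2 * k / 2 = k := by omega
  have hlam : lamWord (2 * k) (xiLen (2 * k) 1) = [k + 1] := by
    norm_num [lamWord, xiLen, h2, lam, tau0, tau1, hd, List.range_succ]
  intro i
  rw [xi, hlam]
  have hrw : wordPlus (reflectWord (2 * k) [k + 1]) = [k] := by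
    simp [wordPlus, reflectWord, List.getLastD]
    omega
  rw [hrw]
  rcases Nat.eq_zero_or_pos i with rfl | hi
  · simp [wordThen]
  · have hne : i ≠ 0 := by omega
    simp [wordThen, per, Nat.not_lt.mpr hi, hne, Nat.mod_one]

lemma gNT_even0 {M k : ℕ} (hM : M = 2 * k) : gNT M 0 = k + 1 := by
  have h2 : M % 2 = 0 := by omega
  simp [gNT, h2, per, hM]

lemma xi1_odd {M k : ℕ} (hM : M = 2 * k + 1) :
    ∀ i, xi M 1 i = if i ≤ 1 then k + 1 else if i % 2 = 1 then k + 1 else k := by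
  subst hM
  have h2 : (2 * k + 1) % 2 = 1 := by omega
  have h2' : ¬ ((2 * k + 1) % 2 = 0) := by omega
  have hd : (2 * k + 1) / 2 = k := by omega
  have hx1 : xiLen (2 * k + 1) 1 = 2 := by simp [xiLen, h2']
  have hlam : lamWord (2 * k + 1) 2 = [k + 1, k + 1] := by
    norm_num [lamWord, lam, h2', tau1, tau2, hd, List.range_succ]
  have hrw : wordPlus (reflectWord (2 * k + 1) [k + 1, k + 1]) = [k, k + 1] := by
    simp [wordPlus, reflectWord, List.getLastD]
    omega
  intro i
  rw [xi, hx1, hlam, hrw]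
  rcases Nat.lt_or_ge i 2 with hi | hi
  · interval_cases i <;> simp [wordThen, per]
  · have hne : ¬ (i < 2) := by omega
    have hle : ¬ (i ≤ 1) := by omega
    have hmod : (i - 2) % 2 = i % 2 := by omega
    simp only [wordThen, List.length_cons, List.length_nil, hne, if_false, per, hmod, hle]
    rcases Nat.mod_two_eq_zero_or_one i with hp | hp <;> simp [hp]

lemma gNT_odd0 {M k : ℕ} (hM : M = 2 * k + 1) : gNT M 0 = k + 1 := by
  subst hM
  have h2' : ¬ ((2 * k + 1) % 2 = 0) := by omega
  have hd : (2 * k + 1) / 2 = k := by omega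
  simp [gNT, h2', per, hd]

lemma gNT_odd1 {M k : ℕ} (hM : M = 2 * k + 1) : gNT M 1 = k + 1 := by
  subst hM
  have h2' : ¬ ((2 * k + 1) % 2 = 0) := by omega
  have hd : (2 * k + 1) / 2 = k := by omega
  simp [gNT, h2', per, hd]

/-- If `α ∈ 𝐕` and `g ≼ α ≺ ξ(1)` (i.e. the corresponding base lies in
`[q_{NT}, q_T)`), then the subshift `V_α` is not topologically transitive. -/
theorem statement7 (M : ℕ) (hM : 1 ≤ M) (α : ℕ → ℕ) (hα : α ∈ Vset M)
    (h1 : SeqLe (gNT M) α) (h2 : SeqLt α (xi M 1)) :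
    ¬ TopTransitive (Vsub M α) := by
  intro htrans
  rcases Nat.mod_two_eq_zero_or_one M with hpar | hpar
  · -- M even
    obtain ⟨k, hM2⟩ : ∃ k, M = 2 * k := ⟨M / 2, by omega⟩
    have hk1 : 1 ≤ k := by omega
    have hxi := xi1_even hM2 hk1
    obtain ⟨D, hD, hDlt⟩ := h2
    have hglo : k + 1 ≤ α 0 := by
      have h := seqLe_ext h1 0 (fun i hi => absurd hi (Nat.not_lt_zero _))
      rwa [gNT_even0 hM2] at h
    have hD0 : D ≠ 0 := by
      intro h; subst h; rw [hxi 0] at hDlt; simp at hDlt; omega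
    have hD1 : 1 ≤ D := Nat.pos_of_ne_zero hD0
    have hα0 : α 0 = k + 1 := by
      have h := hD 0 (by omega); rw [hxi 0] at h; simpa using h
    have hαmid : ∀ i, 1 ≤ i → i < D → α i = k := by
      intro i hi1 hiD
      have h := hD i hiD; rw [hxi i, if_neg (by omega : ¬ i = 0)] at h; exact h
    have hαD : α D < k := by
      have h := hxi D; rw [if_neg hD0] at h; rwa [h] at hDlt
    -- Claim: after a digit k+1, a digit k-1 appears within D steps
    have claim_hi : ∀ x, x ∈ Vsub M α → ∀ n, x n = k + 1 →
        ∃ j, 1 ≤ j ∧ j ≤ D ∧ x (n + j) = k - 1 := by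
      intro x hx n hxn
      by_contra hcon
      push_neg at hcon
      have hall : ∀ j, j < D → 1 ≤ j → x (n + j) = k := by
        intro j
        induction j using Nat.strong_induction_on with
        | _ j ih =>
          intro hjD hj1
          have hub : x (j + n) ≤ α j := seqLe_ext (hx.2 n).2 j (by
            intro i hi
            show x (i + n) = α i
            rcases Nat.eq_zero_or_pos i with rfl | hi1
            · rw [Nat.zero_add, hxn, hα0]
            · rw [Nat.add_comm i n, ih i hi (by omega) hi1, hαmid i hi1 (by omega)])
          have hlb : M - α 0 ≤ x (n + j) := vsub_lb hx _
          have hαj : α j = k := hαmid j hj1 hjD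
          have hne := hcon j hj1 (by omega)
          rw [Nat.add_comm j n] at hub
          omega
      have hub : x (D + n) ≤ α D := seqLe_ext (hx.2 n).2 D (by
        intro i hi
        show x (i + n) = α i
        rcases Nat.eq_zero_or_pos i with rfl | hi1
        · rw [Nat.zero_add, hxn, hα0]
        · rw [Nat.add_comm i n, hall i hi hi1, hαmid i hi1 hi])
      have hlb : M - α 0 ≤ x (n + D) := vsub_lb hx _
      have hne := hcon D hD1 le_rfl
      rw [Nat.add_comm D n] at hub
      omega
    -- Claim: after a digit k-1, a digit k+1 appears within D steps
    have claim_lo : ∀ x, x ∈ Vsub M α → ∀ n, x n = k - 1 →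
        ∃ j, 1 ≤ j ∧ j ≤ D ∧ x (n + j) = k + 1 := by
      intro x hx n hxn
      by_contra hcon
      push_neg at hcon
      have hall : ∀ j, j < D → 1 ≤ j → x (n + j) = k := by
        intro j
        induction j using Nat.strong_induction_on with
        | _ j ih =>
          intro hjD hj1
          have hlb2 : reflectSeq M α j ≤ x (j + n) := seqLe_ext (hx.2 n).1 j (by
            intro i hi
            show M - α i = x (i + n)
            rcases Nat.eq_zero_or_pos i with rfl | hi1
            · rw [Nat.zero_add, hxn, hα0]; omega
            · rw [Nat.add_comm i n, ih i hi (by omega) hi1, hαmid i hi1 (by omega)]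
              omega)
          have hub2 : x (n + j) ≤ α 0 := vsub_ub hx _
          have hαj : α j = k := hαmid j hj1 hjD
          have hne := hcon j hj1 (by omega)
          have hrj : reflectSeq M α j = M - α j := rfl
          rw [hrj, Nat.add_comm j n] at hlb2
          omega
      have hlb2 : reflectSeq M α D ≤ x (D + n) := seqLe_ext (hx.2 n).1 D (by
        intro i hi
        show M - α i = x (i + n)
        rcases Nat.eq_zero_or_pos i with rfl | hi1
        · rw [Nat.zero_add, hxn, hα0]; omega
        · rw [Nat.add_comm i n, hall i hi hi1, hαmid i hi1 hi]; omega)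
      have hub2 : x (n + D) ≤ α 0 := vsub_ub hx _
      have hne := hcon D hD1 le_rfl
      have hrD : reflectSeq M α D = M - α D := rfl
      rw [hrD, Nat.add_comm D n] at hlb2
      omega
    -- chain: after a non-k digit, every window of length D contains a non-k digit
    have chain : ∀ x, x ∈ Vsub M α → ∀ n, x n ≠ k → ∀ a, n < a →
        ∃ p, a ≤ p ∧ p < a + D ∧ x p ≠ k := by
      intro x hx
      have key : ∀ d n, x n ≠ k → ∀ a, n < a → a ≤ n + d →
          ∃ p, a ≤ p ∧ p < a + D ∧ x p ≠ k := by
        intro d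
        induction d with
        | zero => intro n hn a ha1 ha2; exact absurd ha2 (by omega)
        | succ d ih =>
          intro n hn a ha1 ha2
          have hub := vsub_ub hx n
          have hlb := vsub_lb hx n
          rw [hα0] at hub
          have hval : x n = k - 1 ∨ x n = k + 1 := by omega
          have hnext : ∃ j, 1 ≤ j ∧ j ≤ D ∧ x (n + j) ≠ k := by
            rcases hval with hv | hv
            · obtain ⟨j, hj1, hj2, hj3⟩ := claim_lo x hx n hv
              exact ⟨j, hj1, hj2, by omega⟩
            · obtain ⟨j, hj1, hj2, hj3⟩ := claim_hi x hx n hv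
              exact ⟨j, hj1, hj2, by omega⟩
          obtain ⟨j, hj1, hj2, hj3⟩ := hnext
          rcases Nat.lt_or_ge (n + j) a with hlt | hge
          · exact ih (n + j) hj3 a (by omega) (by omega)
          · exact ⟨n + j, hge, by omega, hj3⟩
      intro n hn a ha1
      exact key (a - n) n hn a ha1 (by omega)
    -- the two words
    have hu : [k + 1] ∈ Lang (Vsub M α) := by
      refine ⟨α, hα, 0, ?_⟩
      norm_num [factor, List.range_succ, hα0]
    have hconst : (fun _ : ℕ => k) ∈ Vsub M α := by
      refine ⟨fun i => (by omega : k ≤ M), fun n =>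
        ⟨Or.inl ⟨0, fun i hi => absurd hi (Nat.not_lt_zero _), ?_⟩,
         Or.inl ⟨0, fun i hi => absurd hi (Nat.not_lt_zero _), ?_⟩⟩⟩
      · simp only [reflectSeq, shiftn]; omega
      · simp only [shiftn]; omega
    have hv : List.replicate D k ∈ Lang (Vsub M α) := by
      refine ⟨fun _ => k, hconst, 0, ?_⟩
      rw [List.length_replicate]
      simp [factor, List.map_const', List.eq_replicate_iff]
    obtain ⟨w, hw⟩ := htrans [k + 1] (List.replicate D k) hu hv (by simp)
      (by simp [hD0])
    obtain ⟨x, hx, i, hfac⟩ := hw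
    have hLval : ([k + 1] ++ w ++ List.replicate D k).length = 1 + w.length + D := by
      simp; omega
    have hget : ∀ j, j < 1 + w.length + D →
        ([k + 1] ++ w ++ List.replicate D k).getD j 0 = x (i + j) := by
      intro j hj
      conv_lhs => rw [hfac]
      rw [hLval]
      exact factor_getD x i _ j hj
    have hxi0 : x i = k + 1 := by
      have h := hget 0 (by omega)
      simpa using h.symm
    have hrep : ∀ j, j < D → x (i + (1 + w.length + j)) = k := by
      intro j hj
      have h := hget (1 + w.length + j) (by omega)
      rw [List.getD_append_right _ _ _ _ (by simp; omega)] at h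
      have hidx : 1 + w.length + j - ([k + 1] ++ w).length = j := by simp; omega
      rw [hidx, List.getD_eq_getElem _ _ (by simpa using hj), List.getElem_replicate] at h
      exact h.symm
    obtain ⟨p, hp1, hp2, hp3⟩ := chain x hx i (by omega) (i + 1 + w.length) (by omega)
    have hj : p - (i + 1 + w.length) < D := by omega
    have h := hrep (p - (i + 1 + w.length)) hj
    have harg : i + (1 + w.length + (p - (i + 1 + w.length))) = p := by omega
    rw [harg] at h
    exact hp3 h
  · -- M odd
    obtain ⟨k, hM2⟩ : ∃ k, M = 2 * k + 1 := ⟨M / 2, by omega⟩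
    have hxi := xi1_odd hM2
    obtain ⟨D, hD, hDlt⟩ := h2
    have hglo : k + 1 ≤ α 0 := by
      have h := seqLe_ext h1 0 (fun i hi => absurd hi (Nat.not_lt_zero _))
      rwa [gNT_odd0 hM2] at h
    have hD0 : D ≠ 0 := by
      intro h; subst h; rw [hxi 0] at hDlt; simp at hDlt; omega
    have hα0 : α 0 = k + 1 := by
      have h := hD 0 (by omega); rw [hxi 0] at h; simpa using h
    have hα1ub : α 1 ≤ α 0 := by
      have h := seqLe_ext (hα.2 1).2 0 (fun i hi => absurd hi (Nat.not_lt_zero _))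
      simpa [shiftn] using h
    have hα1lb : k + 1 ≤ α 1 := by
      have h := seqLe_ext h1 1 (by
        intro i hi
        have hi0 : i = 0 := by omega
        subst hi0; rw [gNT_odd0 hM2, hα0])
      rwa [gNT_odd1 hM2] at h
    have hα1 : α 1 = k + 1 := by omega
    have hD1 : D ≠ 1 := by
      intro h; subst h; rw [hxi 1, if_pos (by omega)] at hDlt; omega
    have hαlb : ∀ n, k ≤ α n := by
      intro n
      have h := seqLe_ext (hα.2 n).1 0 (fun i hi => absurd hi (Nat.not_lt_zero _))
      have h' : M - α 0 ≤ α n := by simpa [shiftn, reflectSeq] using h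
      omega
    have hD2 : 2 ≤ D := by omega
    have hDodd : D % 2 = 1 := by
      by_contra h
      have hx := hxi D; rw [if_neg (by omega), if_neg (by omega)] at hx
      rw [hx] at hDlt
      exact absurd hDlt (by have := hαlb D; omega)
    have hαD : α D = k := by
      have hx := hxi D; rw [if_neg (by omega), if_pos hDodd] at hx
      rw [hx] at hDlt
      have := hαlb D; omega
    have hαmid : ∀ i, 2 ≤ i → i < D → α i = if i % 2 = 1 then k + 1 else k := by
      intro i h2i hiD
      have h := hD i hiD; rw [hxi i, if_neg (by omega)] at h; exact h
    -- Claim: after a double (k+1)(k+1), another double appears within D-1 steps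
    have claim_hihi : ∀ x, x ∈ Vsub M α → ∀ n, x n = k + 1 → x (n + 1) = k + 1 →
        ∃ j, 1 ≤ j ∧ j ≤ D - 1 ∧ x (n + j) = x (n + j + 1) := by
      intro x hx n hx0 hx1
      by_contra hcon
      push_neg at hcon
      have halt : ∀ j, 2 ≤ j → j ≤ D → x (n + j) = if j % 2 = 1 then k + 1 else k := by
        intro j
        induction j using Nat.strong_induction_on with
        | _ j ih =>
          intro hj2 hjD
          have hub : x (n + j) ≤ α 0 := vsub_ub hx _
          have hlb : M - α 0 ≤ x (n + j) := vsub_lb hx _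
          have hne : x (n + (j - 1)) ≠ x (n + (j - 1) + 1) := hcon (j - 1) (by omega) (by omega)
          have harg : n + (j - 1) + 1 = n + j := by omega
          rw [harg] at hne
          have hprev : x (n + (j - 1)) = if (j - 1) % 2 = 1 then k + 1 else k := by
            rcases Nat.eq_or_lt_of_le hj2 with heq | hlt
            · have hj1 : j - 1 = 1 := by omega
              rw [hj1]; simpa using hx1
            · exact ih (j - 1) (by omega) (by omega) (by omega)
          rcases Nat.mod_two_eq_zero_or_one j with hp | hp
          · rw [if_pos (by omega : (j - 1) % 2 = 1)] at hprev
            rw [if_neg (by omega)]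
            omega
          · rw [if_neg (by omega : ¬ (j - 1) % 2 = 1)] at hprev
            rw [if_pos hp]
            omega
      have hub : x (D + n) ≤ α D := seqLe_ext (hx.2 n).2 D (by
        intro i hi
        show x (i + n) = α i
        rcases Nat.lt_or_ge i 2 with h2 | h2
        · interval_cases i
          · rw [Nat.zero_add, hx0, hα0]
          · rw [Nat.add_comm 1 n, hx1, hα1]
        · rw [Nat.add_comm i n, halt i h2 (by omega), hαmid i h2 hi])
      have hDD := halt D hD2 le_rfl
      rw [if_pos hDodd] at hDD
      rw [Nat.add_comm D n, hαD] at hub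
      omega
    -- Claim: after a double kk, another double appears within D-1 steps
    have claim_lolo : ∀ x, x ∈ Vsub M α → ∀ n, x n = k → x (n + 1) = k →
        ∃ j, 1 ≤ j ∧ j ≤ D - 1 ∧ x (n + j) = x (n + j + 1) := by
      intro x hx n hx0 hx1
      by_contra hcon
      push_neg at hcon
      have halt : ∀ j, 2 ≤ j → j ≤ D → x (n + j) = if j % 2 = 1 then k else k + 1 := by
        intro j
        induction j using Nat.strong_induction_on with
        | _ j ih =>
          intro hj2 hjD
          have hub : x (n + j) ≤ α 0 := vsub_ub hx _
          have hlb : M - α 0 ≤ x (n + j) := vsub_lb hx _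
          have hne : x (n + (j - 1)) ≠ x (n + (j - 1) + 1) := hcon (j - 1) (by omega) (by omega)
          have harg : n + (j - 1) + 1 = n + j := by omega
          rw [harg] at hne
          have hprev : x (n + (j - 1)) = if (j - 1) % 2 = 1 then k else k + 1 := by
            rcases Nat.eq_or_lt_of_le hj2 with heq | hlt
            · have hj1 : j - 1 = 1 := by omega
              rw [hj1]; simpa using hx1
            · exact ih (j - 1) (by omega) (by omega) (by omega)
          rcases Nat.mod_two_eq_zero_or_one j with hp | hp
          · rw [if_pos (by omega : (j - 1) % 2 = 1)] at hprev
            rw [if_neg (by omega)]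
            omega
          · rw [if_neg (by omega : ¬ (j - 1) % 2 = 1)] at hprev
            rw [if_pos hp]
            omega
      have hlbD : reflectSeq M α D ≤ x (D + n) := seqLe_ext (hx.2 n).1 D (by
        intro i hi
        show M - α i = x (i + n)
        rcases Nat.lt_or_ge i 2 with h2 | h2
        · interval_cases i
          · rw [Nat.zero_add, hx0, hα0]; omega
          · rw [Nat.add_comm 1 n, hx1, hα1]; omega
        · rw [Nat.add_comm i n, halt i h2 (by omega), hαmid i h2 hi]
          rcases Nat.mod_two_eq_zero_or_one i with hp | hp
          · rw [if_neg (by omega), if_neg (by omega)]; omega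
          · rw [if_pos hp, if_pos hp]; omega)
      have hDD := halt D hD2 le_rfl
      rw [if_pos hDodd] at hDD
      have hrD : reflectSeq M α D = M - α D := rfl
      rw [hrD, hαD, Nat.add_comm D n] at hlbD
      omega
    -- combined claim
    have claim_double : ∀ x, x ∈ Vsub M α → ∀ n, x n = x (n + 1) →
        ∃ j, 1 ≤ j ∧ j ≤ D - 1 ∧ x (n + j) = x (n + j + 1) := by
      intro x hx n hdd
      have hub := vsub_ub hx n
      have hlb := vsub_lb hx n
      rw [hα0] at hub
      have hval : x n = k ∨ x n = k + 1 := by omega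
      rcases hval with hv | hv
      · exact claim_lolo x hx n hv (by omega)
      · exact claim_hihi x hx n hv (by omega)
    -- chain
    have chain : ∀ x, x ∈ Vsub M α → ∀ n, x n = x (n + 1) → ∀ a, n < a →
        ∃ p, a ≤ p ∧ p ≤ a + (D - 2) ∧ x p = x (p + 1) := by
      intro x hx
      have key : ∀ d n, x n = x (n + 1) → ∀ a, n < a → a ≤ n + d →
          ∃ p, a ≤ p ∧ p ≤ a + (D - 2) ∧ x p = x (p + 1) := by
        intro d
        induction d with
        | zero => intro n hn a ha1 ha2; exact absurd ha2 (by omega)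
        | succ d ih =>
          intro n hn a ha1 ha2
          obtain ⟨j, hj1, hj2, hj3⟩ := claim_double x hx n hn
          rcases Nat.lt_or_ge (n + j) a with hlt | hge
          · exact ih (n + j) hj3 a (by omega) (by omega)
          · exact ⟨n + j, hge, by omega, hj3⟩
      intro n hn a ha1
      exact key (a - n) n hn a ha1 (by omega)
    -- the two words
    have hu : [k + 1, k + 1] ∈ Lang (Vsub M α) := by
      refine ⟨α, hα, 0, ?_⟩
      norm_num [factor, List.range_succ, hα0, hα1]
    set γ : ℕ → ℕ := fun i => if i % 2 = 0 then k + 1 else k with hγdef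
    have hγval : ∀ i, γ i = if i % 2 = 0 then k + 1 else k := fun i => rfl
    have hγ : γ ∈ Vsub M α := by
      refine ⟨fun i => ?_, fun n => ⟨?_, ?_⟩⟩
      · rw [hγval i]; rcases Nat.mod_two_eq_zero_or_one i with hp | hp
        · rw [if_pos hp]; omega
        · rw [if_neg (by omega)]; omega
      · -- reflect α ≼ shiftn n γ
        rcases Nat.mod_two_eq_zero_or_one n with hp | hp
        · refine Or.inl ⟨0, fun i hi => absurd hi (Nat.not_lt_zero _), ?_⟩
          show M - α 0 < γ (0 + n)
          rw [hγval, if_pos (by omega)]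
          omega
        · refine Or.inl ⟨1, ?_, ?_⟩
          · intro i hi
            have hi0 : i = 0 := by omega
            subst hi0
            show M - α 0 = γ (0 + n)
            rw [hγval, if_neg (by omega)]
            omega
          · show M - α 1 < γ (1 + n)
            rw [hγval, if_pos (by omega)]
            omega
      · -- shiftn n γ ≼ α
        rcases Nat.mod_two_eq_zero_or_one n with hp | hp
        · refine Or.inl ⟨1, ?_, ?_⟩
          · intro i hi
            have hi0 : i = 0 := by omega
            subst hi0
            show γ (0 + n) = α 0
            rw [hγval, if_pos (by omega)]
            omega
          · show γ (1 + n) < α 1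
            rw [hγval, if_neg (by omega)]
            omega
        · refine Or.inl ⟨0, fun i hi => absurd hi (Nat.not_lt_zero _), ?_⟩
          show γ (0 + n) < α 0
          rw [hγval, if_neg (by omega)]
          omega
    have hvlen : (factor γ 0 D).length = D := by simp [factor]
    have hv : factor γ 0 D ∈ Lang (Vsub M α) := by
      refine ⟨γ, hγ, 0, ?_⟩
      rw [hvlen]
    obtain ⟨w, hw⟩ := htrans [k + 1, k + 1] (factor γ 0 D) hu hv (by simp)
      (by intro h; rw [h] at hvlen; simp at hvlen; omega)
    obtain ⟨x, hx, i, hfac⟩ := hw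
    have hLval : ([k + 1, k + 1] ++ w ++ factor γ 0 D).length = 2 + w.length + D := by
      simp [hvlen]; omega
    have hget : ∀ j, j < 2 + w.length + D →
        ([k + 1, k + 1] ++ w ++ factor γ 0 D).getD j 0 = x (i + j) := by
      intro j hj
      conv_lhs => rw [hfac]
      rw [hLval]
      exact factor_getD x i _ j hj
    have hxi0 : x i = k + 1 := by
      have h := hget 0 (by omega)
      simpa using h.symm
    have hxi1 : x (i + 1) = k + 1 := by
      have h := hget 1 (by omega)
      simpa using h.symm
    have hvj : ∀ j, j < D → x (i + (2 + w.length + j)) = if j % 2 = 0 then k + 1 else k := by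
      intro j hj
      have h := hget (2 + w.length + j) (by omega)
      rw [List.getD_append_right _ _ _ _ (by simp; omega)] at h
      have hidx : 2 + w.length + j - ([k + 1, k + 1] ++ w).length = j := by simp; omega
      rw [hidx, factor_getD γ 0 D j hj] at h
      rw [← h, hγval]
      simp
    obtain ⟨p, hp1, hp2, hp3⟩ := chain x hx i (by omega) (i + 2 + w.length) (by omega)
    have hj : p - (i + 2 + w.length) < D - 1 := by omega
    have e1 := hvj (p - (i + 2 + w.length)) (by omega)
    have e2 := hvj (p - (i + 2 + w.length) + 1) (by omega)
    have harg1 : i + (2 + w.length + (p - (i + 2 + w.length))) = p := by omega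
    have harg2 : i + (2 + w.length + (p - (i + 2 + w.length) + 1)) = p + 1 := by omega
    rw [harg1] at e1
    rw [harg2] at e2
    rcases Nat.mod_two_eq_zero_or_one (p - (i + 2 + w.length)) with hp | hp
    · rw [if_pos hp] at e1
      rw [if_neg (by omega)] at e2
      omega
    · rw [if_neg (by omega)] at e1
      rw [if_pos (by omega)] at e2
      omega

end Paper
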